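/- Let X be a compact metric space and α: X → X continuous. Suppose that for each pair (n,ε) there exists a finite set F(n,ε) ⊂ X_α such that α^{-n}(F(n,ε)) ∩ X_α is (n,ε)-spanning for X_α and lim_{n→∞} |F(n,ε)|^{1/n} = 1. Then the forward entropy γ(α) := ln lim_{ε→0} limsup_{n→∞} inf{|α^n(E)|^{1/n} : E is (n,ε)-spanning for X_α} equals 0. -/

import Mathlib

/-!
Fix `ε > 0`. If `X_α` is empty, the empty set is `(n,ε)`-spanning, every infimum is `0`, hence
`G = 0` and `log G = 0` by the convention `Real.log 0 = 0`. Otherwise every spanning set is nonempty, so each infimum is at least `1`.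
Conversely, by compactness of `X_α` and openness of Bowen balls, the spanning set
`α^{-n}(F(n,ε)) ∩ X_α` has a finite spanning subset `E`, and `α^n(E) ⊆ F(n,ε)`. So the infima are
squeezed between `1` and `|F(n,ε)|^{1/n} → 1`, the limsup is `1` for every `ε`, and `G = 1`.
-/

open MeasureTheory Filter Topology
open scoped Classical

noncomputable section

/-- The essential set of a continuous map `α`: points all of whose open neighborhoods
have positive measure for some `α`-invariant regular Borel probability measure. -/
def essentialSet {X : Type*} [TopologicalSpace X] [MeasurableSpace X] (α : X → X) : Set X :=
  {x : X | ∀ V : Set X, IsOpen V → x ∈ V →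
    ∃ μ : Measure X, IsProbabilityMeasure μ ∧ μ.Regular ∧ μ.map α = μ ∧ 0 < μ V}

/-- `E` is `(n,ε)`-spanning for the essential set `X_α`. -/
def IsSpanning {X : Type*} [MetricSpace X] [MeasurableSpace X]
    (α : X → X) (n : ℕ) (ε : ℝ) (E : Set X) : Prop :=
  ∀ y ∈ essentialSet α, ∃ x ∈ E, ∀ i < n, dist (α^[i] x) (α^[i] y) < ε

/-- Its infimum is the quantity inside the limsup defining the forward entropy. -/
def spanningRates {X : Type*} [MetricSpace X] [MeasurableSpace X] (α : X → X) (n : ℕ) (ε : ℝ) :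
    Set ℝ :=
  {c : ℝ | ∃ E : Finset X, IsSpanning α n ε ↑E ∧
    c = ((E.image (α^[n])).card : ℝ) ^ (1 / (n : ℝ))}

theorem isClosed_essentialSet {X : Type*} [TopologicalSpace X] [MeasurableSpace X] (α : X → X) :
    IsClosed (essentialSet α) := by
  rw [← isOpen_compl_iff, isOpen_iff_mem_nhds]
  intro x hx
  simp only [essentialSet, Set.mem_compl_iff, Set.mem_ofPred_eq, not_forall] at hx
  obtain ⟨V, hVopen, hxV, hV⟩ := hx
  filter_upwards [hVopen.mem_nhds hxV] with z hz
  simp only [essentialSet, Set.mem_compl_iff, Set.mem_ofPred_eq, not_forall]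
  exact ⟨V, hVopen, hz, hV⟩

section

variable {X : Type*} [MetricSpace X] {α : X → X}

theorem isOpen_setOf_forall_dist_iterate_lt (hα : Continuous α) (x : X) (n : ℕ) (ε : ℝ) :
    IsOpen {z | ∀ i < n, dist (α^[i] x) (α^[i] z) < ε} := by
  simp only [Set.ofPred_forall]
  exact (Set.finite_lt_nat n).isOpen_biInter fun i _ =>
    isOpen_lt (continuous_const.dist (hα.iterate i)) continuous_const

variable [MeasurableSpace X] {n : ℕ} {ε : ℝ}

theorem IsSpanning.exists_finset_subset [CompactSpace X] (hα : Continuous α) {S : Set X}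
    (hS : IsSpanning α n ε S) : ∃ E : Finset X, IsSpanning α n ε ↑E ∧ ↑E ⊆ S := by
  have hcover : essentialSet α ⊆ ⋃ x ∈ S, {z | ∀ i < n, dist (α^[i] x) (α^[i] z) < ε} := by
    intro y hy
    obtain ⟨x, hxS, hxy⟩ := hS y hy
    exact Set.mem_biUnion hxS hxy
  obtain ⟨T, hTS, hT, hcoverT⟩ := (isClosed_essentialSet α).isCompact.elim_finite_subcover_image
    (fun x _ => isOpen_setOf_forall_dist_iterate_lt hα x n ε) hcover
  refine ⟨hT.toFinset, fun y hy => ?_, by simpa using hTS⟩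
  obtain ⟨x, hxT, hxy⟩ := Set.mem_iUnion₂.1 (hcoverT hy)
  exact ⟨x, hT.mem_toFinset.2 hxT, hxy⟩

theorem bddBelow_spanningRates : BddBelow (spanningRates α n ε) :=
  ⟨0, by rintro c ⟨E, -, rfl⟩; positivity⟩

theorem sInf_spanningRates_le {E : Finset X} (hE : IsSpanning α n ε ↑E) :
    sInf (spanningRates α n ε) ≤ ((E.image (α^[n])).card : ℝ) ^ (1 / (n : ℝ)) :=
  csInf_le bddBelow_spanningRates ⟨E, hE, rfl⟩

theorem one_le_sInf_spanningRates (hne : (essentialSet α).Nonempty) {E : Finset X}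
    (hE : IsSpanning α n ε ↑E) : 1 ≤ sInf (spanningRates α n ε) := by
  refine le_csInf ⟨_, E, hE, rfl⟩ ?_
  rintro c ⟨E', hE', rfl⟩
  obtain ⟨y, hy⟩ := hne
  obtain ⟨x, hxE', -⟩ := hE' y hy
  have hcard : (1 : ℝ) ≤ (E'.image (α^[n])).card := by
    exact_mod_cast Finset.card_pos.2 ⟨α^[n] x, Finset.mem_image_of_mem _ hxE'⟩
  exact Real.one_le_rpow hcard (by positivity)

theorem sInf_spanningRates_eq_zero (hempty : essentialSet α = ∅) (hn : n ≠ 0) :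
    sInf (spanningRates α n ε) = 0 := by
  have hzero : (0 : ℝ) ∈ spanningRates α n ε := by
    refine ⟨∅, by simp [IsSpanning, hempty], ?_⟩
    rw [Finset.image_empty, Finset.card_empty, Nat.cast_zero, Real.zero_rpow (by positivity)]
  exact le_antisymm (csInf_le bddBelow_spanningRates hzero)
    (le_csInf ⟨0, hzero⟩ fun c ⟨E, _, hc⟩ => hc ▸ by positivity)

theorem tendsto_sInf_spanningRates_nhds_one [CompactSpace X] (hα : Continuous α)
    (hne : (essentialSet α).Nonempty) {F : ℕ → Finset X}
    (hF : ∀ n, IsSpanning α n ε (α^[n] ⁻¹' ↑(F n) ∩ essentialSet α))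
    (hFlim : Tendsto (fun n : ℕ => ((F n).card : ℝ) ^ (1 / (n : ℝ))) atTop (𝓝 1)) :
    Tendsto (fun n => sInf (spanningRates α n ε)) atTop (𝓝 1) := by
  choose E hE hEF using fun n => (hF n).exists_finset_subset hα
  refine tendsto_of_tendsto_of_tendsto_of_le_of_le tendsto_const_nhds hFlim
    (fun n => one_le_sInf_spanningRates hne (hE n)) fun n => ?_
  have himage : (E n).image (α^[n]) ⊆ F n := by
    intro z hz
    obtain ⟨x, hxE, rfl⟩ := Finset.mem_image.1 hz
    exact (hEF n hxE).1
  exact (sInf_spanningRates_le (hE n)).trans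
    (Real.rpow_le_rpow (by positivity) (by exact_mod_cast Finset.card_le_card himage)
      (by positivity))

end

theorem forwardEntropy_eq_zero_of_property_star_general
    {X : Type*} [MetricSpace X] [CompactSpace X]
    [MeasurableSpace X]
    (α : X → X) (hα : Continuous α)
    -- Property (*): finite sets `F(n,ε) ⊂ X_α` with `α^{-n}(F(n,ε)) ∩ X_α`
    -- `(n,ε)`-spanning for `X_α` and `|F(n,ε)|^{1/n} → 1`.
    (hstar : ∀ ε > (0 : ℝ), ∃ F : ℕ → Finset X,
      (∀ n : ℕ, ↑(F n) ⊆ essentialSet α ∧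
        IsSpanning α n ε (α^[n] ⁻¹' ↑(F n) ∩ essentialSet α)) ∧
      Tendsto (fun n : ℕ => ((F n).card : ℝ) ^ (1 / (n : ℝ))) atTop (𝓝 1))
    (G : ℝ)
    -- `G = lim_{ε→0} limsup_n inf {|α^n(E)|^{1/n} : E is (n,ε)-spanning for X_α}`
    (hG : Tendsto (fun ε : ℝ => limsup (fun n : ℕ =>
        sInf {c : ℝ | ∃ E : Finset X, IsSpanning α n ε ↑E ∧
          c = ((E.image (α^[n])).card : ℝ) ^ (1 / (n : ℝ))}) atTop) (𝓝[>] 0) (𝓝 G)) :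
    Real.log G = 0 := by
  change Tendsto (fun ε => limsup (fun n => sInf (spanningRates α n ε)) atTop) _ _ at hG
  rcases (essentialSet α).eq_empty_or_nonempty with hempty | hne
  · have hlimsup : ∀ ε : ℝ, limsup (fun n => sInf (spanningRates α n ε)) atTop = 0 := fun ε =>
      (tendsto_const_nhds.congr' <| (eventually_ne_atTop 0).mono fun n hn =>
        (sInf_spanningRates_eq_zero hempty hn).symm).limsup_eq
    simp only [hlimsup] at hG
    rw [tendsto_nhds_unique hG tendsto_const_nhds, Real.log_zero]
  · have hlimsup : ∀ ε > (0 : ℝ), limsup (fun n => sInf (spanningRates α n ε)) atTop = 1 :=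
      fun ε hε => by
        obtain ⟨F, hF, hFlim⟩ := hstar ε hε
        exact (tendsto_sInf_spanningRates_nhds_one hα hne (fun n => (hF n).2) hFlim).limsup_eq
    have hG1 : Tendsto (fun _ : ℝ => (1 : ℝ)) (𝓝[>] 0) (𝓝 G) :=
      hG.congr' (eventually_mem_nhdsWithin.mono hlimsup)
    rw [← tendsto_nhds_unique tendsto_const_nhds hG1, Real.log_one]

/-- Property (*) implies that the forward entropy `γ(α)` vanishes. -/
theorem forwardEntropy_eq_zero_of_property_star
    {X : Type*} [MetricSpace X] [CompactSpace X]
    [MeasurableSpace X] [BorelSpace X]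
    (α : X → X) (hα : Continuous α)
    -- Property (*): finite sets `F(n,ε) ⊂ X_α` with `α^{-n}(F(n,ε)) ∩ X_α`
    -- `(n,ε)`-spanning for `X_α` and `|F(n,ε)|^{1/n} → 1`.
    (hstar : ∀ ε > (0 : ℝ), ∃ F : ℕ → Finset X,
      (∀ n : ℕ, ↑(F n) ⊆ essentialSet α ∧
        IsSpanning α n ε (α^[n] ⁻¹' ↑(F n) ∩ essentialSet α)) ∧
      Tendsto (fun n : ℕ => ((F n).card : ℝ) ^ (1 / (n : ℝ))) atTop (𝓝 1))
    (G : ℝ)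
    -- `G = lim_{ε→0} limsup_n inf {|α^n(E)|^{1/n} : E is (n,ε)-spanning for X_α}`
    (hG : Tendsto (fun ε : ℝ => limsup (fun n : ℕ =>
        sInf {c : ℝ | ∃ E : Finset X, IsSpanning α n ε ↑E ∧
          c = ((E.image (α^[n])).card : ℝ) ^ (1 / (n : ℝ))}) atTop) (𝓝[>] 0) (𝓝 G)) :
    Real.log G = 0 :=
  forwardEntropy_eq_zero_of_property_star_general α hα hstar G hG
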